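/- Let A be an algebra of measurable subsets of [0,1] containing [0,1], and define ‖W‖_{A,□} = sup over S,T ∈ A of |∫_{S×T} W|. For every graphon W and every ε > 0, there exists a partition P of [0,1] into at most 4^{⌈1/ε²⌉−1} sets belonging to A such that ‖W − W_P‖_{A,□} ≤ ε·‖W‖_2. -/

import Mathlib

open MeasureTheory
open scoped Function

/-- `V : ι → Set ℝ` is a partition of `[0,1]`. -/
def IsPartition {ι : Type*} (V : ι → Set ℝ) : Prop :=
  (∀ i, MeasurableSet (V i)) ∧ Pairwise (fun i j => Disjoint (V i) (V j)) ∧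
    (⋃ i, V i) = Set.Icc (0:ℝ) 1

/-- The stepping `W_P` of a kernel `W` on a finite partition `V`. -/
noncomputable def stepW {ι : Type*} [Fintype ι] (V : ι → Set ℝ) (W : ℝ → ℝ → ℝ)
    (x y : ℝ) : ℝ :=
  ∑ i, ∑ j,
    Set.indicator (V i) (fun _ => (1:ℝ)) x * Set.indicator (V j) (fun _ => (1:ℝ)) y *
      ((∫ u in V i, ∫ v in V j, W u v) /
        (MeasureTheory.volume (V i)).toReal / (MeasureTheory.volume (V j)).toReal)

/-- `𝒜` is an algebra of measurable subsets of `[0,1]`. -/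
structure SetAlgebra (𝒜 : Set (Set ℝ)) : Prop where
  subset_Icc : ∀ S ∈ 𝒜, S ⊆ Set.Icc (0:ℝ) 1
  measurable : ∀ S ∈ 𝒜, MeasurableSet S
  univ_mem : Set.Icc (0:ℝ) 1 ∈ 𝒜
  compl_mem : ∀ S ∈ 𝒜, Set.Icc (0:ℝ) 1 \ S ∈ 𝒜
  union_mem : ∀ S ∈ 𝒜, ∀ T ∈ 𝒜, S ∪ T ∈ 𝒜
  inter_mem : ∀ S ∈ 𝒜, ∀ T ∈ 𝒜, S ∩ T ∈ 𝒜

/-- The cut norm restricted to sets of the algebra `𝒜`: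
`‖W‖_{𝒜,□} = sup_{S,T ∈ 𝒜} |∫_{S×T} W|`. -/
noncomputable def cutNormA (𝒜 : Set (Set ℝ)) (W : ℝ → ℝ → ℝ) : ℝ :=
  sSup {r : ℝ | ∃ S ∈ 𝒜, ∃ T ∈ 𝒜, r = |∫ x in S, ∫ y in T, W x y|}

/-- The `L²` norm of a kernel on `[0,1]²`. -/
noncomputable def L2Norm (W : ℝ → ℝ → ℝ) : ℝ :=
  Real.sqrt (∫ x in Set.Icc (0:ℝ) 1, ∫ y in Set.Icc (0:ℝ) 1, (W x y) ^ 2)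

/-!
Energy increment. The energy `Σᵢⱼ |Vᵢ| |Vⱼ| avg_{Vᵢ×Vⱼ}(W)²` of a partition is `‖W_P‖₂² ≤ ‖W‖₂²`.
If `Q` refines `P`, the energy gain is `Σ_{a,b} |Q_a| |Q_b| (avg_Q − avg_P)²` (Pythagoras), while
for `S`, `T` unions of cells of `Q` the integral `∫_{S×T} (W − W_P)` is a sub-sum of
`Σ |Q_a| |Q_b| (avg_Q − avg_P)`; by Cauchy–Schwarz its square is at most the gain. So splitting a
partition along sets `S, T ∈ 𝒜` that witness `‖W − W_P‖_{𝒜,□} > ε ‖W‖₂` raises the energy by more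
than `ε² ‖W‖₂²` and multiplies the number of classes by `4`; this can happen fewer than
`⌈1/ε²⌉` times in a row.
-/

open Finset
open scoped Function

section BoundedKernel

variable {f : ℝ → ℝ → ℝ} {C : ℝ} {A B : Set ℝ}

lemma integrableOn_of_abs_le (hf : Measurable (Function.uncurry f)) (hC : ∀ x y, |f x y| ≤ C)
    (hB : volume B ≠ ⊤) (x : ℝ) : IntegrableOn (f x) B :=
  Measure.integrableOn_of_bounded hB hf.of_uncurry_left.aestronglyMeasurable
    (ae_of_all _ fun y => hC x y)

lemma abs_setIntegral_le (hC : ∀ x y, |f x y| ≤ C) (hB : volume B ≠ ⊤) (x : ℝ) :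
    |∫ y in B, f x y| ≤ C * volume.real B :=
  norm_setIntegral_le_of_norm_le_const_ae (f := f x) hB.lt_top (ae_of_all _ fun y => hC x y)

lemma integrableOn_setIntegral (hf : Measurable (Function.uncurry f))
    (hC : ∀ x y, |f x y| ≤ C) (hA : volume A ≠ ⊤) (hB : volume B ≠ ⊤) :
    IntegrableOn (fun x => ∫ y in B, f x y) A :=
  Measure.integrableOn_of_bounded hA
    (hf.stronglyMeasurable.integral_prod_right' (ν := volume.restrict B)).aestronglyMeasurable
    (ae_of_all _ fun x => abs_setIntegral_le hC hB x)

lemma setIntegral_biUnion_biUnion {ι κ : Type*} (hf : Measurable (Function.uncurry f))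
    (hC : ∀ x y, |f x y| ≤ C) {P : ι → Set ℝ} {Q : κ → Set ℝ}
    (hPm : ∀ a, MeasurableSet (P a)) (hQm : ∀ b, MeasurableSet (Q b))
    (hPd : Pairwise (Disjoint on P)) (hQd : Pairwise (Disjoint on Q))
    (hPf : ∀ a, volume (P a) ≠ ⊤) (hQf : ∀ b, volume (Q b) ≠ ⊤) (σ : Finset ι) (τ : Finset κ) :
    ∫ x in ⋃ a ∈ σ, P a, ∫ y in ⋃ b ∈ τ, Q b, f x y
      = ∑ a ∈ σ, ∑ b ∈ τ, ∫ x in P a, ∫ y in Q b, f x y := by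
  have hσ : volume (⋃ a ∈ σ, P a) ≠ ⊤ :=
    (measure_biUnion_lt_top σ.finite_toSet fun a _ => (hPf a).lt_top).ne
  calc ∫ x in ⋃ a ∈ σ, P a, ∫ y in ⋃ b ∈ τ, Q b, f x y
      = ∫ x in ⋃ a ∈ σ, P a, ∑ b ∈ τ, ∫ y in Q b, f x y := by
        congr 1 with x
        exact integral_biUnion_finset τ (fun b _ => hQm b) (hQd.set_pairwise _)
          fun b _ => integrableOn_of_abs_le hf hC (hQf b) x
    _ = ∑ b ∈ τ, ∫ x in ⋃ a ∈ σ, P a, ∫ y in Q b, f x y :=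
        integral_finsetSum τ fun b _ => integrableOn_setIntegral hf hC hσ (hQf b)
    _ = ∑ b ∈ τ, ∑ a ∈ σ, ∫ x in P a, ∫ y in Q b, f x y :=
        sum_congr rfl fun b _ => integral_biUnion_finset σ (fun a _ => hPm a)
          (hPd.set_pairwise _) fun a _ => integrableOn_setIntegral hf hC (hPf a) (hQf b)
    _ = ∑ a ∈ σ, ∑ b ∈ τ, ∫ x in P a, ∫ y in Q b, f x y := sum_comm

lemma sq_integral_le_measureReal_mul {α : Type*} [MeasurableSpace α] (μ : Measure α)
    [IsFiniteMeasure μ] {g : α → ℝ} (hg : Integrable g μ) (hg2 : Integrable (fun x => g x ^ 2) μ) :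
    (∫ x, g x ∂μ) ^ 2 ≤ μ.real Set.univ * ∫ x, g x ^ 2 ∂μ := by
  rcases eq_zero_or_neZero μ with rfl | _
  · simp
  have hm : 0 < μ.real Set.univ := measureReal_univ_pos
  have hJensen := (Even.convexOn_pow (n := 2) even_two).map_average_le
    (continuous_pow 2).continuousOn isClosed_univ (ae_of_all _ fun _ => Set.mem_univ _) hg hg2
  simp only [average_eq, smul_eq_mul] at hJensen
  rw [mul_pow, inv_pow, sq (μ.real Set.univ), mul_inv, mul_assoc,
    mul_le_mul_iff_right₀ (inv_pos.2 hm), inv_mul_le_iff₀ hm] at hJensen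
  exact hJensen

lemma sq_setIntegral_setIntegral_le (hf : Measurable (Function.uncurry f))
    (hC : ∀ x y, |f x y| ≤ C) (hA : volume A ≠ ⊤) (hB : volume B ≠ ⊤) :
    (∫ x in A, ∫ y in B, f x y) ^ 2
      ≤ volume.real A * volume.real B * ∫ x in A, ∫ y in B, f x y ^ 2 := by
  have : Fact (volume A < ⊤) := ⟨hA.lt_top⟩
  have : Fact (volume B < ⊤) := ⟨hB.lt_top⟩
  set μ := (volume.restrict A).prod (volume.restrict B)
  have hint : Integrable (fun p : ℝ × ℝ => f p.1 p.2) μ :=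
    Integrable.of_bound hf.aestronglyMeasurable C (ae_of_all _ fun p => hC p.1 p.2)
  have hint2 : Integrable (fun p : ℝ × ℝ => f p.1 p.2 ^ 2) μ :=
    Integrable.of_bound (hf.pow_const 2).aestronglyMeasurable (C ^ 2) (ae_of_all _ fun p => by
      simpa [abs_pow] using pow_le_pow_left₀ (abs_nonneg _) (hC p.1 p.2) 2)
  have hμ : μ.real Set.univ = volume.real A * volume.real B := by
    simp [μ, Measure.real, ← Set.univ_prod_univ, Measure.prod_prod, ENNReal.toReal_mul]
  rw [integral_integral hint, integral_integral (f := fun x y => f x y ^ 2) hint2, ← hμ]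
  exact sq_integral_le_measureReal_mul μ hint hint2

end BoundedKernel

/-- Matches the coefficient in `stepW`, including the junk value `0` on null cells. -/
noncomputable def blockAvg (f : ℝ → ℝ → ℝ) (A B : Set ℝ) : ℝ :=
  (∫ x in A, ∫ y in B, f x y) / volume.real A / volume.real B

lemma measureReal_mul_measureReal_mul_blockAvg (f : ℝ → ℝ → ℝ) {A B : Set ℝ}
    (hA : volume A ≠ ⊤) (hB : volume B ≠ ⊤) :
    volume.real A * volume.real B * blockAvg f A B = ∫ x in A, ∫ y in B, f x y := by
  rcases eq_or_ne (volume A) 0 with hA0 | hA0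
  · simp [Measure.restrict_eq_zero.2 hA0, Measure.real, hA0]
  rcases eq_or_ne (volume B) 0 with hB0 | hB0
  · simp [Measure.restrict_eq_zero.2 hB0, Measure.real, hB0]
  have : volume.real A ≠ 0 := ENNReal.toReal_ne_zero.2 ⟨hA0, hA⟩
  have : volume.real B ≠ 0 := ENNReal.toReal_ne_zero.2 ⟨hB0, hB⟩
  simp only [blockAvg]
  field_simp

namespace IsPartition

variable {ι : Type*} {V : ι → Set ℝ}

lemma subset_Icc (hV : IsPartition V) (i : ι) : V i ⊆ Set.Icc 0 1 :=
  hV.2.2 ▸ Set.subset_iUnion V i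

lemma volume_ne_top (hV : IsPartition V) (i : ι) : volume (V i) ≠ ⊤ :=
  ((measure_mono (hV.subset_Icc i)).trans_lt (by simp)).ne

lemma sum_measureReal [Fintype ι] (hV : IsPartition V) : ∑ i, volume.real (V i) = 1 := by
  rw [← measureReal_iUnion_fintype hV.2.1 hV.1 fun i => hV.volume_ne_top i, hV.2.2]
  simp

lemma mem_iff_eq (hV : IsPartition V) {i : ι} {x : ℝ} (hx : x ∈ V i) (k : ι) :
    x ∈ V k ↔ k = i :=
  ⟨fun hk => by_contra fun h => (hV.2.1 h).ne_of_mem hk hx rfl, fun h => h ▸ hx⟩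

lemma stepW_eq [Fintype ι] (hV : IsPartition V) (W : ℝ → ℝ → ℝ) {i j : ι} {x y : ℝ}
    (hx : x ∈ V i) (hy : y ∈ V j) : stepW V W x y = blockAvg W (V i) (V j) := by
  classical
  simp only [stepW, Set.indicator_apply, hV.mem_iff_eq hx, hV.mem_iff_eq hy, mul_ite, mul_one,
    mul_zero, ite_mul, one_mul, zero_mul, sum_ite_eq', mem_univ, ↓reduceIte]
  rfl

end IsPartition

section Step

variable {ι : Type*} [Fintype ι] (V : ι → Set ℝ) (W : ℝ → ℝ → ℝ)

lemma measurable_stepW (hVm : ∀ i, MeasurableSet (V i)) :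
    Measurable (Function.uncurry (stepW V W)) :=
  Finset.measurable_sum _ fun i _ => Finset.measurable_sum _ fun j _ =>
    ((measurable_const.indicator (hVm i)).comp measurable_fst).mul
      ((measurable_const.indicator (hVm j)).comp measurable_snd) |>.mul_const _

lemma abs_stepW_le (x y : ℝ) : |stepW V W x y| ≤ ∑ i, ∑ j, |blockAvg W (V i) (V j)| := by
  refine (abs_sum_le_sum_abs _ _).trans (sum_le_sum fun i _ => ?_)
  refine (abs_sum_le_sum_abs _ _).trans (sum_le_sum fun j _ => ?_)
  rw [abs_mul]
  refine mul_le_of_le_one_left (abs_nonneg _) ?_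
  rw [abs_mul]
  exact mul_le_one₀ ((norm_indicator_le_norm_self (fun _ => (1 : ℝ)) x).trans_eq norm_one)
    (abs_nonneg _) ((norm_indicator_le_norm_self (fun _ => (1 : ℝ)) y).trans_eq norm_one)

noncomputable def energy : ℝ :=
  ∑ i, ∑ j, volume.real (V i) * volume.real (V j) * blockAvg W (V i) (V j) ^ 2

lemma energy_nonneg : 0 ≤ energy V W :=
  sum_nonneg fun _ _ => sum_nonneg fun _ _ => by positivity

end Step

lemma energy_le_L2Norm_sq {W : ℝ → ℝ → ℝ} {C : ℝ} (hW : Measurable (Function.uncurry W))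
    (hC : ∀ x y, |W x y| ≤ C) {ι : Type*} [Fintype ι] {V : ι → Set ℝ} (hV : IsPartition V) :
    energy V W ≤ L2Norm W ^ 2 := by
  have hW2 : Measurable (Function.uncurry fun x y => W x y ^ 2) := hW.pow_const 2
  have hC2 : ∀ x y, |W x y ^ 2| ≤ C ^ 2 := fun x y => by
    simpa [abs_pow] using pow_le_pow_left₀ (abs_nonneg _) (hC x y) 2
  have hIcc : ⋃ i ∈ (univ : Finset ι), V i = Set.Icc 0 1 := by simpa using hV.2.2
  rw [L2Norm, Real.sq_sqrt (integral_nonneg fun x => integral_nonneg fun y => sq_nonneg _),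
    ← hIcc, setIntegral_biUnion_biUnion hW2 hC2 hV.1 hV.1 hV.2.1 hV.2.1 hV.volume_ne_top
    hV.volume_ne_top]
  refine sum_le_sum fun i _ => sum_le_sum fun j _ => ?_
  have hCS := sq_setIntegral_setIntegral_le hW hC (hV.volume_ne_top i) (hV.volume_ne_top j)
  rw [← measureReal_mul_measureReal_mul_blockAvg W (hV.volume_ne_top i)
    (hV.volume_ne_top j)] at hCS
  have hw : 0 ≤ volume.real (V i) * volume.real (V j) := by positivity
  rcases hw.eq_or_lt with hw0 | hwpos
  · rw [← hw0, zero_mul]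
    exact integral_nonneg fun x => integral_nonneg fun y => sq_nonneg _
  · nlinarith

section Refinement

variable {ι κ : Type*} {V : ι → Set ℝ} {U : κ → Set ℝ}

def commonRefinement (V : ι → Set ℝ) (U : κ → Set ℝ) : ι × κ → Set ℝ := fun a => V a.1 ∩ U a.2

def bipartition (S : Set ℝ) (b : Bool) : Set ℝ := cond b S (Set.Icc 0 1 \ S)

lemma IsPartition.commonRefinement (hV : IsPartition V) (hU : IsPartition U) :
    IsPartition (commonRefinement V U) := by
  refine ⟨fun a => (hV.1 a.1).inter (hU.1 a.2), fun a b hab => ?_, ?_⟩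
  · rcases eq_or_ne a.1 b.1 with h1 | h1
    · have h2 : a.2 ≠ b.2 := fun h2 => hab (Prod.ext h1 h2)
      exact (hU.2.1 h2).mono Set.inter_subset_right Set.inter_subset_right
    · exact (hV.2.1 h1).mono Set.inter_subset_left Set.inter_subset_left
  · change ⋃ a : ι × κ, V a.1 ∩ U a.2 = _
    rw [Set.iUnion_prod', ← Set.iUnion_inter_iUnion, hV.2.2, hU.2.2,
      Set.inter_self]

lemma isPartition_bipartition {S : Set ℝ} (hS : MeasurableSet S) (hSI : S ⊆ Set.Icc 0 1) :
    IsPartition (bipartition S) := by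
  refine ⟨fun b => ?_, fun a b hab => ?_, ?_⟩
  · cases b
    exacts [measurableSet_Icc.diff hS, hS]
  · cases a <;> cases b <;> simp_all [bipartition, Set.disjoint_sdiff_left,
      Set.disjoint_sdiff_right]
  · change ⋃ b, cond b S _ = _
    rw [← Set.union_eq_iUnion, Set.union_sdiff_cancel hSI]

lemma biUnion_product_commonRefinement (σ : Finset ι) (τ : Finset κ) :
    ⋃ a ∈ σ ×ˢ τ, commonRefinement V U a = (⋃ i ∈ σ, V i) ∩ ⋃ c ∈ τ, U c := by
  ext x
  simp only [mem_product, commonRefinement, Set.mem_iUnion, Set.mem_inter_iff, exists_prop,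
    Prod.exists]
  tauto

lemma iUnion_commonRefinement (hV : IsPartition V) (hU : IsPartition U) (i : ι) :
    ⋃ c, commonRefinement V U (i, c) = V i := by
  simp only [commonRefinement, ← Set.inter_iUnion, hU.2.2, Set.inter_eq_left.2 (hV.subset_Icc i)]

end Refinement

lemma sum_sum_mul_sub_sq_eq {ι κ : Type*} [Fintype ι] [Fintype κ] {w : ι → ℝ} {q : ι × κ → ℝ}
    {s : ι → ι → ℝ} {t : ι × κ → ι × κ → ℝ} (hq : ∀ i, ∑ c, q (i, c) = w i)
    (ht : ∀ i j, ∑ c, ∑ d, q (i, c) * q (j, d) * t (i, c) (j, d) = w i * w j * s i j) :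
    ∑ a, ∑ b, q a * q b * (t a b - s a.1 b.1) ^ 2
      = ∑ a, ∑ b, q a * q b * t a b ^ 2 - ∑ i, ∑ j, w i * w j * s i j ^ 2 := by
  have hsplit (F : ι × κ → ι × κ → ℝ) :
      ∑ a, ∑ b, F a b = ∑ i, ∑ j, ∑ c, ∑ d, F (i, c) (j, d) := by
    simp only [Fintype.sum_prod_type]
    exact sum_congr rfl fun i _ => sum_comm
  have hblock (i j : ι) : ∑ c, ∑ d, q (i, c) * q (j, d) * (t (i, c) (j, d) - s i j) ^ 2
      = ∑ c, ∑ d, q (i, c) * q (j, d) * t (i, c) (j, d) ^ 2 - w i * w j * s i j ^ 2 := by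
    have hexp (c d : κ) : q (i, c) * q (j, d) * (t (i, c) (j, d) - s i j) ^ 2
        = q (i, c) * q (j, d) * t (i, c) (j, d) ^ 2
          - 2 * s i j * (q (i, c) * q (j, d) * t (i, c) (j, d))
          + s i j ^ 2 * (q (i, c) * q (j, d)) := by
      ring
    simp only [hexp, sum_add_distrib, sum_sub_distrib, ← mul_sum, ← sum_mul, ht, hq]
    ring
  rw [hsplit, hsplit (fun a b => q a * q b * t a b ^ 2), ← sum_sub_distrib]
  refine sum_congr rfl fun i _ => ?_
  rw [← sum_sub_distrib]
  exact sum_congr rfl fun j _ => hblock i j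

lemma sq_sum_sum_le_sum_sum_mul_sq {α : Type*} [Fintype α] {p : α → ℝ} (hp : ∀ a, 0 ≤ p a)
    (hp1 : ∑ a, p a = 1) (x : α → α → ℝ) (σ τ : Finset α) :
    (∑ a ∈ σ, ∑ b ∈ τ, p a * p b * x a b) ^ 2 ≤ ∑ a, ∑ b, p a * p b * x a b ^ 2 := by
  have hpp (z : α × α) : 0 ≤ p z.1 * p z.2 := mul_nonneg (hp z.1) (hp z.2)
  have hmass : ∑ z ∈ σ ×ˢ τ, p z.1 * p z.2 ≤ 1 := calc
    _ ≤ ∑ z : α × α, p z.1 * p z.2 :=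
      sum_le_sum_of_subset_of_nonneg (subset_univ _) fun z _ _ => hpp z
    _ = 1 := by rw [← univ_product_univ, sum_product, ← sum_mul_sum, hp1, one_mul]
  rw [← sum_product' (f := fun a b => p a * p b * x a b), ← sum_product' (s := univ)]
  calc (∑ z ∈ σ ×ˢ τ, p z.1 * p z.2 * x z.1 z.2) ^ 2
      ≤ (∑ z ∈ σ ×ˢ τ, p z.1 * p z.2) * ∑ z ∈ σ ×ˢ τ, p z.1 * p z.2 * x z.1 z.2 ^ 2 :=
        sum_sq_le_sum_mul_sum_of_sq_le_mul _ (fun z _ => hpp z)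
          (fun z _ => mul_nonneg (hpp z) (sq_nonneg _)) fun z _ => le_of_eq (by ring)
    _ ≤ 1 * ∑ z ∈ σ ×ˢ τ, p z.1 * p z.2 * x z.1 z.2 ^ 2 :=
        mul_le_mul_of_nonneg_right hmass (sum_nonneg fun z _ => mul_nonneg (hpp z) (sq_nonneg _))
    _ ≤ ∑ z ∈ univ ×ˢ univ, p z.1 * p z.2 * x z.1 z.2 ^ 2 := by
        rw [one_mul]
        exact sum_le_sum_of_subset_of_nonneg (product_subset_product (subset_univ _)
          (subset_univ _)) fun z _ _ => mul_nonneg (hpp z) (sq_nonneg _)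

section EnergyIncrement

variable {W : ℝ → ℝ → ℝ} {C : ℝ} {ι κ : Type*} [Fintype κ]
  {V : ι → Set ℝ} {U : κ → Set ℝ}

lemma sum_measureReal_commonRefinement (hV : IsPartition V) (hU : IsPartition U) (i : ι) :
    ∑ c, volume.real (commonRefinement V U (i, c)) = volume.real (V i) := by
  have hQ := hV.commonRefinement hU
  rw [← measureReal_iUnion_fintype (fun c d hcd => hQ.2.1 fun h => hcd (Prod.ext_iff.1 h).2)
    (fun c => hQ.1 _) fun c => hQ.volume_ne_top _, iUnion_commonRefinement hV hU]

lemma sum_sum_setIntegral_commonRefinement (hW : Measurable (Function.uncurry W))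
    (hC : ∀ x y, |W x y| ≤ C) (hV : IsPartition V) (hU : IsPartition U) (i j : ι) :
    ∑ c, ∑ d, ∫ x in commonRefinement V U (i, c), ∫ y in commonRefinement V U (j, d), W x y
      = ∫ x in V i, ∫ y in V j, W x y := by
  have hQ := hV.commonRefinement hU
  have hrow (k : ι) : Pairwise (Disjoint on fun c => commonRefinement V U (k, c)) :=
    fun c d hcd => hQ.2.1 fun h => hcd (Prod.ext_iff.1 h).2
  have hunion (k : ι) : ⋃ c ∈ (univ : Finset κ), commonRefinement V U (k, c) = V k := by
    simpa using iUnion_commonRefinement hV hU k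
  rw [← setIntegral_biUnion_biUnion hW hC (fun c => hQ.1 _) (fun d => hQ.1 _) (hrow i) (hrow j)
    (fun c => hQ.volume_ne_top _) (fun d => hQ.volume_ne_top _), hunion, hunion]

lemma setIntegral_setIntegral_sub_stepW [Fintype ι] (hW : Measurable (Function.uncurry W))
    (hC : ∀ x y, |W x y| ≤ C) (hV : IsPartition V) {i j : ι} {A B : Set ℝ}
    (hAm : MeasurableSet A) (hBm : MeasurableSet B) (hAV : A ⊆ V i) (hBV : B ⊆ V j) :
    ∫ x in A, ∫ y in B, (W x y - stepW V W x y)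
      = (∫ x in A, ∫ y in B, W x y) - volume.real A * volume.real B * blockAvg W (V i) (V j) := by
  have hA : volume A ≠ ⊤ := ne_top_of_le_ne_top (hV.volume_ne_top i) (measure_mono hAV)
  have hB : volume B ≠ ⊤ := ne_top_of_le_ne_top (hV.volume_ne_top j) (measure_mono hBV)
  have hrow : ∀ x ∈ A, ∫ y in B, (W x y - stepW V W x y)
      = (∫ y in B, W x y) - volume.real B * blockAvg W (V i) (V j) := fun x hx => by
    rw [setIntegral_congr_fun hBm fun y hy => by rw [hV.stepW_eq W (hAV hx) (hBV hy)],
      integral_sub (integrableOn_of_abs_le hW hC hB x) (integrableOn_const hB), setIntegral_const,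
      smul_eq_mul]
  rw [setIntegral_congr_fun hAm hrow, integral_sub (integrableOn_setIntegral hW hC hA hB)
    (integrableOn_const hA), setIntegral_const, smul_eq_mul, mul_assoc]

theorem sq_setIntegral_sub_stepW_le_energy_sub [Fintype ι] (hW : Measurable (Function.uncurry W))
    (hC : ∀ x y, |W x y| ≤ C) (hV : IsPartition V) (hU : IsPartition U) (σ τ : Finset κ) :
    (∫ x in ⋃ c ∈ σ, U c, ∫ y in ⋃ c ∈ τ, U c, (W x y - stepW V W x y)) ^ 2
      ≤ energy (commonRefinement V U) W - energy V W := by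
  set Q := commonRefinement V U
  have hQ : IsPartition Q := hV.commonRefinement hU
  set q : ι × κ → ℝ := fun a => volume.real (Q a)
  set d : ι × κ → ι × κ → ℝ := fun a b => blockAvg W (Q a) (Q b) - blockAvg W (V a.1) (V b.1)
  have hblocks (i j : ι) : ∑ c, ∑ e, q (i, c) * q (j, e) * blockAvg W (Q (i, c)) (Q (j, e))
      = volume.real (V i) * volume.real (V j) * blockAvg W (V i) (V j) := by
    simp only [q, measureReal_mul_measureReal_mul_blockAvg W (hQ.volume_ne_top _)
      (hQ.volume_ne_top _), measureReal_mul_measureReal_mul_blockAvg W (hV.volume_ne_top i)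
      (hV.volume_ne_top j)]
    exact sum_sum_setIntegral_commonRefinement hW hC hV hU i j
  have hpythagoras : ∑ a, ∑ b, q a * q b * d a b ^ 2 = energy Q W - energy V W :=
    sum_sum_mul_sub_sq_eq (w := fun i => volume.real (V i)) (s := fun i j => blockAvg W (V i) (V j))
      (t := fun a b => blockAvg W (Q a) (Q b)) (sum_measureReal_commonRefinement hV hU) hblocks
  have hDm : Measurable (Function.uncurry fun x y => W x y - stepW V W x y) :=
    hW.sub (measurable_stepW V W hV.1)
  have hDC (x y : ℝ) : |W x y - stepW V W x y| ≤ C + ∑ i, ∑ j, |blockAvg W (V i) (V j)| :=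
    (abs_sub _ _).trans (add_le_add (hC x y) (abs_stepW_le V W x y))
  have hcells (ρ : Finset κ) : ⋃ c ∈ ρ, U c = ⋃ a ∈ univ ×ˢ ρ, Q a := by
    rw [biUnion_product_commonRefinement]
    simp only [mem_univ, Set.iUnion_true, hV.2.2]
    exact (Set.inter_eq_right.2 (Set.iUnion₂_subset fun c _ => hU.subset_Icc c)).symm
  have hsum : ∫ x in ⋃ c ∈ σ, U c, ∫ y in ⋃ c ∈ τ, U c, (W x y - stepW V W x y)
      = ∑ a ∈ univ ×ˢ σ, ∑ b ∈ univ ×ˢ τ, q a * q b * d a b := by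
    rw [hcells σ, hcells τ, setIntegral_biUnion_biUnion hDm hDC hQ.1 hQ.1 hQ.2.1 hQ.2.1
      hQ.volume_ne_top hQ.volume_ne_top]
    refine sum_congr rfl fun a _ => sum_congr rfl fun b _ => ?_
    rw [setIntegral_setIntegral_sub_stepW hW hC hV (hQ.1 a) (hQ.1 b) Set.inter_subset_left
      Set.inter_subset_left, ← measureReal_mul_measureReal_mul_blockAvg W (hQ.volume_ne_top a)
      (hQ.volume_ne_top b)]
    ring
  rw [hsum, ← hpythagoras]
  exact sq_sum_sum_le_sum_sum_mul_sq (fun a => measureReal_nonneg) hQ.sum_measureReal d _ _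

end EnergyIncrement

section Splitting

variable {ι : Type*} {V : ι → Set ℝ} {S T : Set ℝ}

def splitBy (V : ι → Set ℝ) (S T : Set ℝ) : ι × Bool × Bool → Set ℝ :=
  commonRefinement V (commonRefinement (bipartition S) (bipartition T))

lemma IsPartition.splitBy (hV : IsPartition V) (hS : MeasurableSet S) (hSI : S ⊆ Set.Icc 0 1)
    (hT : MeasurableSet T) (hTI : T ⊆ Set.Icc 0 1) : IsPartition (splitBy V S T) :=
  hV.commonRefinement ((isPartition_bipartition hS hSI).commonRefinement
    (isPartition_bipartition hT hTI))

lemma SetAlgebra.splitBy_mem {𝒜 : Set (Set ℝ)} (h𝒜 : SetAlgebra 𝒜) (hV : ∀ i, V i ∈ 𝒜)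
    (hS : S ∈ 𝒜) (hT : T ∈ 𝒜) (a : ι × Bool × Bool) : splitBy V S T a ∈ 𝒜 := by
  have hbip {R : Set ℝ} (hR : R ∈ 𝒜) (b : Bool) : bipartition R b ∈ 𝒜 := by
    cases b
    exacts [h𝒜.compl_mem R hR, hR]
  exact h𝒜.inter_mem _ (hV a.1) _ (h𝒜.inter_mem _ (hbip hS a.2.1) _ (hbip hT a.2.2))

lemma energy_add_sq_le_energy_splitBy [Fintype ι] {W : ℝ → ℝ → ℝ} {C : ℝ}
    (hW : Measurable (Function.uncurry W)) (hC : ∀ x y, |W x y| ≤ C) (hV : IsPartition V)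
    (hS : MeasurableSet S) (hSI : S ⊆ Set.Icc 0 1) (hT : MeasurableSet T)
    (hTI : T ⊆ Set.Icc 0 1) :
    energy V W + (∫ x in S, ∫ y in T, (W x y - stepW V W x y)) ^ 2 ≤ energy (splitBy V S T) W := by
  have hSp := isPartition_bipartition hS hSI
  have hTp := isPartition_bipartition hT hTI
  have hcellsS : ⋃ c ∈ {true} ×ˢ univ, commonRefinement (bipartition S) (bipartition T) c = S := by
    rw [biUnion_product_commonRefinement, set_biUnion_singleton]
    simp only [mem_univ, Set.iUnion_true, hTp.2.2]
    exact Set.inter_eq_left.2 hSI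
  have hcellsT : ⋃ c ∈ univ ×ˢ {true}, commonRefinement (bipartition S) (bipartition T) c = T := by
    rw [biUnion_product_commonRefinement, set_biUnion_singleton]
    simp only [mem_univ, Set.iUnion_true, hSp.2.2]
    exact Set.inter_eq_right.2 hTI
  have := sq_setIntegral_sub_stepW_le_energy_sub hW hC hV (hSp.commonRefinement hTp)
    ({true} ×ˢ univ) (univ ×ˢ {true})
  rw [hcellsS, hcellsT] at this
  unfold splitBy
  linarith

end Splitting

lemma exists_lt_abs_of_lt_cutNormA {𝒜 : Set (Set ℝ)} {f : ℝ → ℝ → ℝ} {b : ℝ} (hb : 0 ≤ b)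
    (h : b < cutNormA 𝒜 f) : ∃ S ∈ 𝒜, ∃ T ∈ 𝒜, b < |∫ x in S, ∫ y in T, f x y| := by
  by_contra! hle
  exact h.not_ge (Real.sSup_le (by rintro r ⟨S, hS, T, hT, rfl⟩; exact hle S hS T hT) hb)

section Iteration

variable {𝒜 : Set (Set ℝ)} {W : ℝ → ℝ → ℝ} {C b : ℝ}

lemma exists_energy_splitBy_gt (h𝒜 : SetAlgebra 𝒜) (hW : Measurable (Function.uncurry W))
    (hC : ∀ x y, |W x y| ≤ C) {ι : Type*} [Fintype ι] {V : ι → Set ℝ} (hV : IsPartition V)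
    (hb : 0 ≤ b) (hbad : b < cutNormA 𝒜 fun x y => W x y - stepW V W x y) :
    ∃ S ∈ 𝒜, ∃ T ∈ 𝒜, energy V W + b ^ 2 < energy (splitBy V S T) W := by
  obtain ⟨S, hS, T, hT, hlt⟩ := exists_lt_abs_of_lt_cutNormA hb hbad
  refine ⟨S, hS, T, hT, ?_⟩
  have hsq : b ^ 2 < (∫ x in S, ∫ y in T, (W x y - stepW V W x y)) ^ 2 := by
    simpa only [sq_abs] using pow_lt_pow_left₀ hlt hb two_ne_zero
  linarith [energy_add_sq_le_energy_splitBy hW hC hV (h𝒜.measurable S hS) (h𝒜.subset_Icc S hS)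
    (h𝒜.measurable T hT) (h𝒜.subset_Icc T hT)]

lemma exists_partition_cutNormA_le_or_le_energy (h𝒜 : SetAlgebra 𝒜)
    (hW : Measurable (Function.uncurry W)) (hC : ∀ x y, |W x y| ≤ C) (hb : 0 ≤ b) (k : ℕ) :
    ∃ (ι : Type) (_ : Fintype ι) (V : ι → Set ℝ), IsPartition V ∧ (∀ i, V i ∈ 𝒜) ∧
      Fintype.card ι ≤ 4 ^ k ∧
      (cutNormA 𝒜 (fun x y => W x y - stepW V W x y) ≤ b ∨ k * b ^ 2 ≤ energy V W) := by
  induction k with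
  | zero =>
    refine ⟨Unit, inferInstance, fun _ => Set.Icc 0 1,
      ⟨fun _ => measurableSet_Icc, Subsingleton.pairwise, Set.iUnion_const _⟩,
      fun _ => h𝒜.univ_mem, by simp, Or.inr ?_⟩
    simpa using energy_nonneg _ W
  | succ k ih =>
    obtain ⟨ι, _, V, hV, hV𝒜, hcard, hgood_or_energy⟩ := ih
    rcases le_or_gt (cutNormA 𝒜 fun x y => W x y - stepW V W x y) b with hgood | hbad
    · exact ⟨ι, _, V, hV, hV𝒜, hcard.trans (Nat.pow_le_pow_right four_pos k.le_succ), Or.inl hgood⟩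
    have henergy := hgood_or_energy.resolve_left hbad.not_ge
    obtain ⟨S, hS, T, hT, hgt⟩ := exists_energy_splitBy_gt h𝒜 hW hC hV hb hbad
    refine ⟨ι × Bool × Bool, inferInstance, splitBy V S T,
      hV.splitBy (h𝒜.measurable S hS) (h𝒜.subset_Icc S hS) (h𝒜.measurable T hT)
        (h𝒜.subset_Icc T hT), h𝒜.splitBy_mem hV𝒜 hS hT, ?_, Or.inr ?_⟩
    · simpa [Fintype.card_prod, pow_succ] using hcard
    · push_cast
      linarith

end Iteration

lemma IsPartition.comp_equiv {ι κ : Type*} {V : ι → Set ℝ} (hV : IsPartition V) (e : κ ≃ ι) :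
    IsPartition (V ∘ e) :=
  ⟨fun _ => hV.1 _, fun _ _ h => hV.2.1 (e.injective.ne h),
    (e.surjective.iUnion_comp V).trans hV.2.2⟩

lemma stepW_comp_equiv {ι κ : Type*} [Fintype ι] [Fintype κ] (V : ι → Set ℝ) (e : κ ≃ ι)
    (W : ℝ → ℝ → ℝ) : stepW (V ∘ e) W = stepW V W := by
  ext x y
  exact Fintype.sum_equiv e _ _ fun i => Fintype.sum_equiv e _ _ fun j => rfl

theorem weak_regularity_algebra_general (𝒜 : Set (Set ℝ)) (h𝒜 : SetAlgebra 𝒜)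
    (W : ℝ → ℝ → ℝ)
    (hmeas : Measurable (Function.uncurry W))
    (hbdd : ∃ C : ℝ, ∀ x y, |W x y| ≤ C)
    (ε : ℝ) (hε : 0 < ε) :
    ∃ (m : ℕ) (V : Fin m → Set ℝ), IsPartition V ∧ (∀ i, V i ∈ 𝒜) ∧
      m ≤ 4 ^ (Nat.ceil (1 / ε ^ 2) - 1) ∧
      cutNormA 𝒜 (fun x y => W x y - stepW V W x y) ≤ ε * L2Norm W := by
  obtain ⟨C, hC⟩ := hbdd
  set k := Nat.ceil (1 / ε ^ 2) - 1
  have hk : 1 ≤ ((k : ℝ) + 1) * ε ^ 2 := by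
    have hceil : ((k : ℝ) + 1) = Nat.ceil (1 / ε ^ 2) := by
      rw [← Nat.cast_add_one, Nat.sub_add_cancel (Nat.ceil_pos.2 (by positivity))]
    calc (1 : ℝ) = 1 / ε ^ 2 * ε ^ 2 := by field_simp
      _ ≤ _ := by rw [hceil]; exact mul_le_mul_of_nonneg_right (Nat.le_ceil _) (sq_nonneg ε)
  have hb : 0 ≤ ε * L2Norm W := mul_nonneg hε.le (Real.sqrt_nonneg _)
  obtain ⟨ι, _, V, hV, hV𝒜, hcard, hgood⟩ :=
    exists_partition_cutNormA_le_or_le_energy h𝒜 hmeas hC hb k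
  have hcut : cutNormA 𝒜 (fun x y => W x y - stepW V W x y) ≤ ε * L2Norm W := by
    refine le_of_not_gt fun hbad => ?_
    have henergy := hgood.resolve_left hbad.not_ge
    obtain ⟨S, hS, T, hT, hgt⟩ := exists_energy_splitBy_gt h𝒜 hmeas hC hV hb hbad
    have hle := energy_le_L2Norm_sq hmeas hC (hV.splitBy (h𝒜.measurable S hS)
      (h𝒜.subset_Icc S hS) (h𝒜.measurable T hT) (h𝒜.subset_Icc T hT))
    nlinarith [le_mul_of_one_le_left (sq_nonneg (L2Norm W)) hk]
  let e := (Fintype.equivFin ι).symm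
  exact ⟨Fintype.card ι, V ∘ e, hV.comp_equiv e, fun i => hV𝒜 _, hcard,
    by rwa [stepW_comp_equiv]⟩

/-- Weak regularity with respect to an algebra `𝒜`: for every graphon `W` and
`ε > 0` there is a partition of `[0,1]` into at most `4^{⌈1/ε²⌉−1}` classes
belonging to `𝒜` such that `‖W − W_P‖_{𝒜,□} ≤ ε ‖W‖₂`. -/
theorem weak_regularity_algebra (𝒜 : Set (Set ℝ)) (h𝒜 : SetAlgebra 𝒜)
    (W : ℝ → ℝ → ℝ)
    (hmeas : Measurable (Function.uncurry W)) (hsymm : ∀ x y, W x y = W y x)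
    (hbdd : ∃ C : ℝ, ∀ x y, |W x y| ≤ C)
    (ε : ℝ) (hε : 0 < ε) :
    ∃ (m : ℕ) (V : Fin m → Set ℝ), IsPartition V ∧ (∀ i, V i ∈ 𝒜) ∧
      m ≤ 4 ^ (Nat.ceil (1 / ε ^ 2) - 1) ∧
      cutNormA 𝒜 (fun x y => W x y - stepW V W x y) ≤ ε * L2Norm W :=
  weak_regularity_algebra_general 𝒜 h𝒜 W hmeas hbdd ε hε
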